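/- Let I ⊆ ℝ be an interval and x, y : I → ℝ differentiable functions satisfying x′(t) = −2·x(t)·(3x(t) − y(t))·(x(t) + y(t)) and y′(t) = 2·y(t)·(x(t) − 3y(t))·(x(t) + y(t)), and suppose x(t)·y(t) ≠ 0 for all t ∈ I. Then the function H(t) := (y(t) − x(t))² / ( x(t)³ · y(t)³ ) is constant on I; i.e. H is a first integral of the system. -/

import Mathlib

/-!
Along a solution, the quotient rule writes `H′ · x⁶y⁶` as
`2(y − x)(y′ − x′)·x³y³ − 3(y − x)²·x²y²(y x′ + x y′)`. For this vector field
`y′ − x′ = 6(x − y)(x + y)²` and `y x′ + x y′ = −4xy(x + y)²`, so both terms equal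
`−12 (x − y)² (x + y)² x³y³` and cancel. A function with vanishing derivative on an interval is
constant there.
-/

theorem Convex.eq_of_forall_hasDerivWithinAt_zero {E : Type*} [NormedAddCommGroup E]
    [NormedSpace ℝ E] {s : Set ℝ} (hs : Convex ℝ s) {f : ℝ → E}
    (hf : ∀ t ∈ s, HasDerivWithinAt f 0 s t) {a b : ℝ} (ha : a ∈ s) (hb : b ∈ s) :
    f a = f b := by
  have h := hs.norm_image_sub_le_of_norm_hasDerivWithin_le (C := 0) hf
    (fun _ _ => norm_zero.le) ha hb
  rwa [zero_mul, norm_le_zero_iff, sub_eq_zero, eq_comm] at h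

theorem hasDerivAt_first_integral_of_planar_bracket_flow {x y : ℝ → ℝ} {t : ℝ}
    (hx : HasDerivAt x (-2 * x t * (3 * x t - y t) * (x t + y t)) t)
    (hy : HasDerivAt y (2 * y t * (x t - 3 * y t) * (x t + y t)) t)
    (hxy : x t * y t ≠ 0) :
    HasDerivAt (fun u => (y u - x u) ^ 2 / (x u ^ 3 * y u ^ 3)) 0 t := by
  have hden : x t ^ 3 * y t ^ 3 ≠ 0 := by rw [← mul_pow]; exact pow_ne_zero 3 hxy
  refine (((hy.sub hx).pow 2).div ((hx.pow 3).mul (hy.pow 3)) hden).congr_deriv ?_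
  rw [div_eq_zero_iff]
  left
  simp only [Pi.mul_apply, Pi.pow_apply, Pi.sub_apply]
  ring

theorem first_integral_planar_bracket_flow (I : Set ℝ) (hI : I.OrdConnected)
    (x y : ℝ → ℝ)
    (hx : ∀ t ∈ I, HasDerivAt x (-2 * x t * (3 * x t - y t) * (x t + y t)) t)
    (hy : ∀ t ∈ I, HasDerivAt y (2 * y t * (x t - 3 * y t) * (x t + y t)) t)
    (hne : ∀ t ∈ I, x t * y t ≠ 0) :
    ∀ s ∈ I, ∀ t ∈ I,
      (y s - x s)^2 / ((x s)^3 * (y s)^3) = (y t - x t)^2 / ((x t)^3 * (y t)^3) :=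
  fun _ hs _ ht => hI.convex.eq_of_forall_hasDerivWithinAt_zero
    (fun u hu => (hasDerivAt_first_integral_of_planar_bracket_flow (hx u hu) (hy u hu)
      (hne u hu)).hasDerivWithinAt) hs ht
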